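/- Let K be a spherically complete valued field of equi-characteristic 0, let B ⊆ Kⁿ be a ball, and let f : B → X be a risometry onto a subset X ⊆ B. Then X = B; that is, every risometry from a ball into itself is surjective onto the ball. -/

import Mathlib

/-- The sup-norm on `Kⁿ` induced by a valuation `v : K → Γ₀`. -/
noncomputable def supVal {K Γ₀ : Type*} [Field K] [LinearOrderedCommGroupWithZero Γ₀]
    (v : Valuation K Γ₀) {n : ℕ} (x : Fin n → K) : Γ₀ :=
  letI : OrderBot Γ₀ := { bot := 0, bot_le := fun _ => zero_le' }
  Finset.univ.sup fun i => v (x i)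

/-- A (valuative) ball in `K`. -/
def IsBall1 {K Γ₀ : Type*} [Field K] [LinearOrderedCommGroupWithZero Γ₀]
    (v : Valuation K Γ₀) (B : Set K) : Prop :=
  B.Infinite ∧ ∀ x ∈ B, ∀ x' ∈ B, ∀ y : K, v (x - y) ≤ v (x - x') → y ∈ B

/-- A (valuative) ball in `Kⁿ` with respect to the sup-norm. -/
def IsBall {K Γ₀ : Type*} [Field K] [LinearOrderedCommGroupWithZero Γ₀]
    (v : Valuation K Γ₀) {n : ℕ} (B : Set (Fin n → K)) : Prop :=
  B.Infinite ∧ ∀ x ∈ B, ∀ x' ∈ B, ∀ y : Fin n → K,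
    supVal v (x - y) ≤ supVal v (x - x') → y ∈ B

/-- `K` is spherically complete. -/
def SphericallyComplete {K Γ₀ : Type*} [Field K] [LinearOrderedCommGroupWithZero Γ₀]
    (v : Valuation K Γ₀) : Prop :=
  ∀ C : Set (Set K), C.Nonempty → (∀ B ∈ C, IsBall1 v B) →
    IsChain (· ⊆ ·) C → (⋂₀ C).Nonempty

/-- A risometry from `B₁` onto `B₂`. -/
def IsRisometryOn {K Γ₀ : Type*} [Field K] [LinearOrderedCommGroupWithZero Γ₀]
    (v : Valuation K Γ₀) {n : ℕ} (φ : (Fin n → K) → (Fin n → K))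
    (B₁ B₂ : Set (Fin n → K)) : Prop :=
  Set.BijOn φ B₁ B₂ ∧
    ∀ x₁ ∈ B₁, ∀ x₂ ∈ B₁, x₁ ≠ x₂ →
      supVal v (φ x₁ - φ x₂ - (x₁ - x₂)) < supVal v (x₁ - x₂)

section SV
variable {K Γ₀ : Type*} [Field K] [LinearOrderedCommGroupWithZero Γ₀]
  (v : Valuation K Γ₀) {n : ℕ}

lemma supVal_le_iff {x : Fin n → K} {r : Γ₀} :
    supVal v x ≤ r ↔ ∀ i, v (x i) ≤ r := by
  simp [supVal, Finset.sup_le_iff]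

lemma le_supVal (x : Fin n → K) (i : Fin n) : v (x i) ≤ supVal v x :=
  (supVal_le_iff v).mp le_rfl i

lemma supVal_add_le (x y : Fin n → K) :
    supVal v (x + y) ≤ max (supVal v x) (supVal v y) := by
  rw [supVal_le_iff]
  intro i
  exact le_trans (v.map_add _ _) (max_le_max (le_supVal v x i) (le_supVal v y i))

lemma supVal_neg (x : Fin n → K) : supVal v (-x) = supVal v x := by
  simp [supVal, Valuation.map_neg]

lemma supVal_zero : supVal (n := n) v 0 = 0 :=
  le_antisymm ((supVal_le_iff v).mpr fun i => by simp) zero_le'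

lemma exists_supVal_eq [NeZero n] (x : Fin n → K) : ∃ i, supVal v x = v (x i) := by
  letI : OrderBot Γ₀ := { bot := 0, bot_le := fun _ => zero_le' }
  obtain ⟨i, -, h⟩ := Finset.exists_mem_eq_sup Finset.univ
    (Finset.univ_nonempty (α := Fin n)) (fun i => v (x i))
  exact ⟨i, h⟩
end SV

/-- over a spherically complete valued field of equi-characteristic 0
(char K = 0 and residue characteristic 0), any risometry from a ball `B ⊆ Kⁿ`
onto a subset `X ⊆ B` is in fact onto `B`. -/
theorem risometry_into_ball_surjective {K Γ₀ : Type*} [Field K]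
    [LinearOrderedCommGroupWithZero Γ₀] (v : Valuation K Γ₀) [CharZero K]
    (hres : ∀ m : ℕ, m ≠ 0 → v (m : K) = 1) (hsph : SphericallyComplete v)
    {n : ℕ} (B X : Set (Fin n → K)) (hB : IsBall v B) (hX : X ⊆ B)
    (f : (Fin n → K) → (Fin n → K)) (hf : IsRisometryOn v f B X) :
    X = B := by
  refine Set.Subset.antisymm hX fun b hb => ?_
  by_contra hbX
  -- n ≠ 0
  have hn : n ≠ 0 := by
    rintro rfl
    exact hB.1 (Set.toFinite B)
  haveI : NeZero n := ⟨hn⟩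
  -- notation
  set d : (Fin n → K) → Γ₀ := fun x => supVal v (b - f x) with hd
  set Bc : (Fin n → K) → Γ₀ → Set (Fin n → K) :=
    fun x r => {y | supVal v (x - y) ≤ r} with hBc
  -- basic facts
  have hfX : ∀ x ∈ B, f x ∈ X := fun x hx => hf.1.1 hx
  have hfneb : ∀ x ∈ B, f x ≠ b := fun x hx h => hbX (h ▸ hfX x hx)
  have hbfne : ∀ x ∈ B, b - f x ≠ 0 := fun x hx h =>
    hfneb x hx (by linear_combination (norm := abel) -h)
  have hdne : ∀ x ∈ B, d x ≠ 0 := by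
    intro x hx h
    obtain ⟨i, hi⟩ := Function.ne_iff.mp (hbfne x hx)
    have h1 : v ((b - f x) i) ≤ 0 := h ▸ le_supVal v _ i
    exact hi (v.zero_iff.mp (le_zero_iff.mp h1))
  -- difference triangle
  have tri : ∀ u t w : Fin n → K,
      supVal v (u - w) ≤ max (supVal v (u - t)) (supVal v (t - w)) := by
    intro u t w
    have : u - w = (u - t) + (t - w) := by ring
    rw [this]; exact supVal_add_le v _ _
  have svsub : ∀ u w : Fin n → K, supVal v (u - w) = supVal v (w - u) := by
    intro u w
    rw [show w - u = -(u - w) by ring, supVal_neg]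
  -- Lemma C : Bc x (d x) ⊆ B
  have hsubB : ∀ x ∈ B, Bc x (d x) ⊆ B := by
    intro x hx z hz
    have hm : d x ≤ max (supVal v (x - b)) (supVal v (x - f x)) := by
      have := tri b x (f x)
      rwa [svsub b x] at this
    rcases max_cases (supVal v (x - b)) (supVal v (x - f x)) with ⟨he, _⟩ | ⟨he, _⟩
    · exact hB.2 x hx b hb z (le_trans hz (he ▸ hm))
    · exact hB.2 x hx (f x) (hX (hfX x hx)) z (le_trans hz (he ▸ hm))
  -- Lemma B : d monotone on balls
  have hdmono : ∀ x ∈ B, ∀ y ∈ B, supVal v (x - y) ≤ d x → d y ≤ d x := by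
    intro x hx y hy hxy
    by_cases hyx : y = x
    · subst hyx; exact le_rfl
    have hris := hf.2 y hy x hx hyx
    have h1 : supVal v (f y - f x - (y - x)) < supVal v (y - x) := hris
    have h2 : supVal v (y - x) ≤ d x := by rwa [svsub y x]
    have key : b - f y = (b - f x) + (-(y - x)) + (-(f y - f x - (y - x))) := by ring
    calc d y = supVal v (b - f y) := rfl
      _ ≤ max (max (supVal v (b - f x)) (supVal v (-(y - x))))
            (supVal v (-(f y - f x - (y - x)))) := by
          rw [key]
          exact le_trans (supVal_add_le v _ _)
            (max_le_max (supVal_add_le v _ _) le_rfl)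
      _ ≤ d x := by
          rw [supVal_neg, supVal_neg]
          exact max_le (max_le le_rfl h2) (le_of_lt (lt_of_lt_of_le h1 h2))
  -- ball nesting
  have hnest : ∀ (x y : Fin n → K) (r r' : Γ₀),
      supVal v (x - y) ≤ r → r' ≤ r → Bc y r' ⊆ Bc x r := by
    intro x y r r' hxy hr z hz
    exact le_trans (tri x y z) (max_le hxy (le_trans hz hr))
  have hmem_self : ∀ (x : Fin n → K) (r : Γ₀), x ∈ Bc x r := by
    intro x r
    show supVal v (x - x) ≤ r
    simp [supVal_zero]
  -- Lemma A : strict descent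
  have hdesc : ∀ x ∈ B, ∃ x' ∈ B, supVal v (x - x') = d x ∧ d x' < d x := by
    intro x hx
    refine ⟨x + (b - f x), ?_, ?_, ?_⟩
    · have hm : d x ≤ max (supVal v (x - b)) (supVal v (x - f x)) := by
        have := tri b x (f x); rwa [svsub b x] at this
      have hxx' : supVal v (x - (x + (b - f x))) = d x := by
        rw [show x - (x + (b - f x)) = -(b - f x) by ring, supVal_neg]
      rcases max_cases (supVal v (x - b)) (supVal v (x - f x)) with ⟨he, _⟩ | ⟨he, _⟩
      · exact hB.2 x hx b hb _ (le_trans (le_of_eq hxx') (he ▸ hm))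
      · exact hB.2 x hx (f x) (hX (hfX x hx)) _ (le_trans (le_of_eq hxx') (he ▸ hm))
    · rw [show x - (x + (b - f x)) = -(b - f x) by ring, supVal_neg]
    · set x' := x + (b - f x) with hx'
      have hx'B : x' ∈ B := by
        have hm : d x ≤ max (supVal v (x - b)) (supVal v (x - f x)) := by
          have := tri b x (f x); rwa [svsub b x] at this
        have hxx' : supVal v (x - x') = d x := by
          rw [show x - x' = -(b - f x) by rw [hx']; ring, supVal_neg]
        rcases max_cases (supVal v (x - b)) (supVal v (x - f x)) with ⟨he, _⟩ | ⟨he, _⟩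
        · exact hB.2 x hx b hb _ (le_trans (le_of_eq hxx') (he ▸ hm))
        · exact hB.2 x hx (f x) (hX (hfX x hx)) _ (le_trans (le_of_eq hxx') (he ▸ hm))
      have hne : x' ≠ x := by
        intro h
        exact hbfne x hx (by rw [hx'] at h; linear_combination (norm := abel) h)
      have hris := hf.2 x' hx'B x hx hne
      have hxx'val : supVal v (x' - x) = d x := by
        rw [show x' - x = b - f x by rw [hx']; ring]
      have keq : b - f x' = -(f x' - f x - (x' - x)) := by
        rw [hx']; ring
      calc d x' = supVal v (b - f x') := rfl
        _ = supVal v (f x' - f x - (x' - x)) := by rw [keq, supVal_neg]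
        _ < supVal v (x' - x) := hris
        _ = d x := hxx'val
  -- Zorn
  set S : Set (Set (Fin n → K)) := {s | ∃ x ∈ B, s = Bc x (d x)} with hS
  have hzorn : ∃ m, Minimal (· ∈ S) m := by
    apply zorn_superset
    intro c hcS hchain
    rcases Set.eq_empty_or_nonempty c with rfl | hcne
    · obtain ⟨x₀, hx₀⟩ := hB.1.nonempty
      exact ⟨Bc x₀ (d x₀), ⟨x₀, hx₀, rfl⟩, by simp⟩
    have hcent : ∀ s ∈ c, ∃ x, x ∈ B ∧ s = Bc x (d x) := fun s hs => hcS hs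
    choose cen hcenB hceq using hcent
    -- projections
    have himg : ∀ (s : Set (Fin n → K)) (hs : s ∈ c) (i : Fin n),
        (fun y : Fin n → K => y i) '' s
          = {a : K | v (cen s hs i - a) ≤ d (cen s hs)} := by
      intro s hs i
      ext a
      constructor
      · rintro ⟨z, hz, rfl⟩
        have hz' : supVal v (cen s hs - z) ≤ d (cen s hs) := by
          rw [hceq s hs] at hz; exact hz
        show v (cen s hs i - z i) ≤ d (cen s hs)
        exact le_trans (le_supVal v (cen s hs - z) i) hz'
      · intro ha
        refine ⟨Function.update (cen s hs) i a, ?_, by simp⟩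
        have hmem : Function.update (cen s hs) i a
            ∈ Bc (cen s hs) (d (cen s hs)) := by
          show supVal v (cen s hs - Function.update (cen s hs) i a) ≤ d (cen s hs)
          rw [supVal_le_iff]
          intro j
          by_cases hj : j = i
          · subst hj
            simpa using ha
          · simp [Function.update_of_ne hj]
        rwa [← hceq s hs] at hmem
    -- apply spherical completeness coordinatewise
    have hinter : ∀ i : Fin n,
        (⋂₀ ((fun s => (fun y : Fin n → K => y i) '' s) '' c)).Nonempty := by
      intro i
      apply hsph
      · exact hcne.image _
      · rintro t ⟨s, hs, rfl⟩
        show IsBall1 v ((fun y : Fin n → K => y i) '' s)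
        rw [himg s hs i]
        constructor
        · -- infinite
          obtain ⟨j, hj⟩ := exists_supVal_eq v (b - f (cen s hs))
          have ha0ne : (b - f (cen s hs)) j ≠ 0 := by
            intro h
            refine hdne _ (hcenB s hs) ?_
            show supVal v (b - f (cen s hs)) = 0
            rw [hj, h, v.map_zero]
          refine Set.infinite_of_injective_forall_mem
            (f := fun m : ℕ => cen s hs i + (m : K) * (b - f (cen s hs)) j) ?_ ?_
          · intro m m' hmm'
            simp only [add_right_inj] at hmm'
            exact_mod_cast mul_right_cancel₀ ha0ne hmm'
          · intro m
            show v (cen s hs i - (cen s hs i + (m : K) * (b - f (cen s hs)) j))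
              ≤ d (cen s hs)
            rw [show cen s hs i - (cen s hs i + (m : K) * (b - f (cen s hs)) j)
                = -((m : K) * (b - f (cen s hs)) j) by ring,
              v.map_neg, v.map_mul]
            rcases Nat.eq_zero_or_pos m with rfl | hm
            · simp
            · rw [hres m hm.ne', one_mul]
              exact hj.ge
        · -- ball axiom
          intro x1 h1 x2 h2 y hy
          set p := cen s hs i
          set r := d (cen s hs)
          have h12 : v (x1 - x2) ≤ r := by
            calc v (x1 - x2) = v ((x1 - p) + (p - x2)) := by ring_nf
              _ ≤ max (v (x1 - p)) (v (p - x2)) := v.map_add _ _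
              _ ≤ r := max_le (by rwa [v.map_sub_swap]) h2
          calc v (p - y) = v ((p - x1) + (x1 - y)) := by ring_nf
            _ ≤ max (v (p - x1)) (v (x1 - y)) := v.map_add _ _
            _ ≤ r := max_le h1 (le_trans hy h12)
      · exact IsChain.image_of_map_rel _ _ _ (fun _ _ h => Set.image_mono h) hchain
    choose w hw using hinter
    -- w lies in every ball of the chain
    have hwmem : ∀ s ∈ c, w ∈ s := by
      intro s hs
      rw [hceq s hs]
      show supVal v (cen s hs - w) ≤ d (cen s hs)
      rw [supVal_le_iff]
      intro i
      have : w i ∈ (fun y : Fin n → K => y i) '' s :=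
        hw i _ ⟨s, hs, rfl⟩
      rw [himg s hs i] at this
      exact this
    obtain ⟨s₀, hs₀⟩ := hcne
    have hwB : w ∈ B := by
      have := hwmem s₀ hs₀
      rw [hceq s₀ hs₀] at this
      exact hsubB _ (hcenB s₀ hs₀) this
    refine ⟨Bc w (d w), ⟨w, hwB, rfl⟩, ?_⟩
    intro s hs
    rw [hceq s hs]
    have hws : supVal v (cen s hs - w) ≤ d (cen s hs) := by
      have := hwmem s hs; rwa [hceq s hs] at this
    exact hnest _ _ _ _ hws (hdmono _ (hcenB s hs) _ hwB hws)
  obtain ⟨m, hm⟩ := hzorn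
  obtain ⟨x, hxB, rfl⟩ := hm.1
  obtain ⟨x', hx'B, hxx', hdlt⟩ := hdesc x hxB
  have hsub : Bc x' (d x') ⊆ Bc x (d x) :=
    hnest _ _ _ _ (le_of_eq hxx') (le_of_lt hdlt)
  have heq : Bc x (d x) ⊆ Bc x' (d x') := hm.2 ⟨x', hx'B, rfl⟩ hsub
  have : supVal v (x' - x) ≤ d x' := heq (hmem_self x (d x))
  rw [svsub x' x, hxx'] at this
  exact absurd this (not_le.mpr hdlt)
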